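/- In the Bauer–Catanese case G = (ℤ/3ℤ)²: with F = Π₁ × Π₂ and K the kernel of (p,q) ↦ φ(p) − ψ(q), the quotient group ⁅F, F⁆ / ⁅K, K⁆ is isomorphic to ℤ/3ℤ. -/

import Mathlib

/-!
Write `π` for the projection `F → F ⧸ ⁅K, K⁆`. As `ψ` is onto, every `p ∈ Π₁` is the first
coordinate of an element of `K`, and so is every `n ∈ ker φ` (paired with `1`); hence
`π (n, 1)` commutes with `π (p, 1)`. So `p ↦ π (p, 1)` has nilpotent image of class at most
two, and `π (⁅p, p'⁆, 1)` depends only on `φ p` and `φ p'`. Since `φ (a₁ ^ m * a₂ ^ n) = (m, n)`,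
these elements are the powers of `c = π (⁅a₁, a₂⁆, 1)`, and `c ^ 3 = π (⁅a₁, a₂ ^ 3⁆, 1) = 1`.
The second factor brings nothing new, since `(⁅p, p'⁆, ⁅q, q'⁆) ∈ ⁅K, K⁆` whenever
`(p, q), (p', q') ∈ K`.

Finally `c ≠ 1`: lift `φ` and `ψ` to the Heisenberg group over `ℤ/3`. Its commutators only
depend on the images in `(ℤ/3)²`, so the two lifts agree on `⁅K, K⁆`, whereas `⁅a₁, a₂⁆` lifts
to a nontrivial central element.
-/

/-- Relators of `Π₁ = ⟨a₁,…,a₄ ∣ a₁³,…,a₄³, a₁a₂a₃a₄⟩`. -/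
def bcRels₁ : Set (FreeGroup (Fin 4)) :=
  {FreeGroup.of 0 ^ 3, FreeGroup.of 1 ^ 3, FreeGroup.of 2 ^ 3, FreeGroup.of 3 ^ 3,
   FreeGroup.of 0 * FreeGroup.of 1 * FreeGroup.of 2 * FreeGroup.of 3}

/-- Relators of `Π₂ = ⟨b₁,…,b₄ ∣ b₁³,…,b₄³, b₁b₂b₃b₄⟩`. -/
def bcRels₂ : Set (FreeGroup (Fin 4)) :=
  {FreeGroup.of 0 ^ 3, FreeGroup.of 1 ^ 3, FreeGroup.of 2 ^ 3, FreeGroup.of 3 ^ 3,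
   FreeGroup.of 0 * FreeGroup.of 1 * FreeGroup.of 2 * FreeGroup.of 3}

/-- The group `G = (ℤ/3ℤ)²`, written multiplicatively. -/
abbrev bcG : Type := Multiplicative (ZMod 3 × ZMod 3)

open scoped commutatorElement

theorem Prod.mk_commutatorElement_mk {G H : Type*} [Group G] [Group H] (a a' : G) (b b' : H) :
    ⁅(a, b), (a', b')⁆ = (⁅a, a'⁆, ⁅b, b'⁆) :=
  rfl

theorem nonempty_zpowers_mulEquiv_zmod {G : Type*} [Group G] {g : G} {n : ℕ}
    (hg : orderOf g = n) : Nonempty (Subgroup.zpowers g ≃* Multiplicative (ZMod n)) := by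
  rw [← hg, ← Nat.card_zpowers]
  exact ⟨(zmodCyclicMulEquiv inferInstance).symm⟩

section CommutatorsOfTwoStepImage

variable {P Q G : Type*} [Group P] [Group Q] [CommGroup G] (f : P →* Q) {φ : P →* G}

theorem map_commutatorElement_mul_right (hf : ∀ a b c : P, Commute (f ⁅a, b⁆) (f c))
    (a b c : P) : f ⁅a, b * c⁆ = f ⁅a, b⁆ * f ⁅a, c⁆ := by
  rw [commutatorElement_mul_right_eq_mul_conj, map_mul, map_mul, map_mul, mul_assoc (f ⁅a, b⁆),
    (hf a c b).symm.eq, ← mul_assoc, map_inv, mul_inv_cancel_right]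

theorem map_commutatorElement_mul_left (hf : ∀ a b c : P, Commute (f ⁅a, b⁆) (f c))
    (a b c : P) : f ⁅a * b, c⁆ = f ⁅a, c⁆ * f ⁅b, c⁆ := by
  rw [commutatorElement_mul_left_eq_conj_mul, map_mul, map_mul, map_mul, (hf b c a).symm.eq,
    map_inv, mul_inv_cancel_right]
  exact (hf b c ⁅a, c⁆).eq

theorem map_commutatorElement_pow_pow (hf : ∀ a b c : P, Commute (f ⁅a, b⁆) (f c))
    (a b : P) (m n : ℕ) : f ⁅a ^ m, b ^ n⁆ = f ⁅a, b⁆ ^ (m * n) := by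
  have hright (k : ℕ) : f ⁅a, b ^ k⁆ = f ⁅a, b⁆ ^ k := by
    induction k with
    | zero => simp
    | succ k ih => rw [pow_succ, map_commutatorElement_mul_right f hf, ih, pow_succ]
  induction m with
  | zero => simp
  | succ m ih =>
    rw [pow_succ, map_commutatorElement_mul_left f hf, ih, hright, ← pow_add, Nat.succ_mul]

theorem map_commutatorElement_pow_mul_pow (hf : ∀ a b c : P, Commute (f ⁅a, b⁆) (f c))
    (x y : P) (m n k l : ℕ) :
    f ⁅x ^ m * y ^ n, x ^ k * y ^ l⁆ = f ⁅x, y⁆ ^ ((m * l : ℤ) - n * k) := by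
  simp only [map_commutatorElement_mul_left f hf, map_commutatorElement_mul_right f hf,
    map_commutatorElement_pow_pow f hf, commutatorElement_self, map_one, one_pow, one_mul,
    mul_one, ← commutatorElement_inv x y, map_inv]
  rw [zpow_sub, ← Nat.cast_mul, ← Nat.cast_mul, zpow_natCast, zpow_natCast, inv_pow]

theorem commutatorElement_mem_ker (a b : P) : ⁅a, b⁆ ∈ φ.ker := by
  rw [MonoidHom.mem_ker, map_commutatorElement, commutatorElement_eq_one_iff_commute]
  exact Commute.all _ _

theorem commute_map_commutatorElement (hf : ∀ n ∈ φ.ker, ∀ c, Commute (f n) (f c))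
    (a b c : P) : Commute (f ⁅a, b⁆) (f c) :=
  hf _ (commutatorElement_mem_ker a b) c

theorem map_commutatorElement_congr (hf : ∀ n ∈ φ.ker, ∀ c, Commute (f n) (f c))
    {p p₁ p' p₁' : P} (h : φ p = φ p₁) (h' : φ p' = φ p₁') :
    f ⁅p, p'⁆ = f ⁅p₁, p₁'⁆ := by
  have hbil := commute_map_commutatorElement f hf
  have hker {x y : P} (hxy : φ x = φ y) : y⁻¹ * x ∈ φ.ker := by
    rw [MonoidHom.mem_ker, map_mul, map_inv, hxy, inv_mul_cancel]
  have hone {n x : P} (hn : n ∈ φ.ker) : f ⁅x, n⁆ = 1 := by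
    rw [map_commutatorElement, commutatorElement_eq_one_iff_commute]
    exact (hf n hn x).symm
  calc f ⁅p, p'⁆ = f ⁅p₁ * (p₁⁻¹ * p), p₁' * (p₁'⁻¹ * p')⁆ := by
        simp only [mul_inv_cancel_left]
    _ = f ⁅p₁, p₁'⁆ := by
      rw [map_commutatorElement_mul_right f hbil, hone (hker h'), mul_one,
        map_commutatorElement_mul_left f hbil, ← commutatorElement_inv _ (p₁⁻¹ * p), map_inv,
        hone (hker h), inv_one, mul_one]

end CommutatorsOfTwoStepImage

section FiberProduct

variable {P₁ P₂ G : Type*} [Group P₁] [Group P₂] [CommGroup G]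
variable (φ : P₁ →* G) (ψ : P₂ →* G)

abbrev fiberProduct : Subgroup (P₁ × P₂) :=
  (φ.comp (MonoidHom.fst P₁ P₂) / ψ.comp (MonoidHom.snd P₁ P₂)).ker

variable {φ ψ}

theorem mk_mem_fiberProduct {p : P₁} {q : P₂} :
    (p, q) ∈ fiberProduct φ ψ ↔ φ p = ψ q := by
  simp [div_eq_one]

theorem commutatorElement_mem_commutator_fiberProduct {p p' : P₁} {q q' : P₂}
    (h : φ p = ψ q) (h' : φ p' = ψ q') :
    (⁅p, p'⁆, ⁅q, q'⁆) ∈ ⁅fiberProduct φ ψ, fiberProduct φ ψ⁆ :=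
  Subgroup.commutator_mem_commutator (mk_mem_fiberProduct.2 h) (mk_mem_fiberProduct.2 h')

theorem commute_mk_inl_of_mem_ker (hψ : Function.Surjective ψ) {n : P₁} (hn : n ∈ φ.ker)
    (p : P₁) :
    Commute (QuotientGroup.mk' ⁅fiberProduct φ ψ, fiberProduct φ ψ⁆ (n, (1 : P₂)))
      (QuotientGroup.mk' ⁅fiberProduct φ ψ, fiberProduct φ ψ⁆ (p, 1)) := by
  obtain ⟨q, hq⟩ := hψ (φ p)
  have hmem := commutatorElement_mem_commutator_fiberProduct (q := 1)
    (by rw [hn, map_one]) hq.symm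
  rw [commutatorElement_one_left] at hmem
  rw [← commutatorElement_eq_one_iff_commute, ← map_commutatorElement,
    Prod.mk_commutatorElement_mk, commutatorElement_one_left]
  exact (QuotientGroup.eq_one_iff _).2 hmem

theorem mk_inl_commutatorElement_pow_eq_one (hψ : Function.Surjective ψ) (x : P₁) {y : P₁}
    {n : ℕ} (hy : y ^ n = 1) :
    QuotientGroup.mk' ⁅fiberProduct φ ψ, fiberProduct φ ψ⁆ (⁅x, y⁆, (1 : P₂)) ^ n = 1 := by
  let f := (QuotientGroup.mk' ⁅fiberProduct φ ψ, fiberProduct φ ψ⁆).comp (MonoidHom.inl P₁ P₂)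
  have h := map_commutatorElement_pow_pow f
    (commute_map_commutatorElement f fun _ hn => commute_mk_inl_of_mem_ker hψ hn) x y 1 n
  rw [pow_one, one_mul, hy, commutatorElement_one_right, map_one] at h
  exact h.symm

theorem map_commutator_top_le (hφ : Function.Surjective φ)
    (S : Subgroup ((P₁ × P₂) ⧸ ⁅fiberProduct φ ψ, fiberProduct φ ψ⁆))
    (hS : ∀ p p' : P₁, QuotientGroup.mk' _ (⁅p, p'⁆, (1 : P₂)) ∈ S) :
    Subgroup.map (QuotientGroup.mk' ⁅fiberProduct φ ψ, fiberProduct φ ψ⁆)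
      ⁅(⊤ : Subgroup (P₁ × P₂)), ⊤⁆ ≤ S := by
  rw [Subgroup.map_commutator, Subgroup.commutator_le]
  rintro _ ⟨⟨p, q⟩, -, rfl⟩ _ ⟨⟨p', q'⟩, -, rfl⟩
  obtain ⟨p₀, hp₀⟩ := hφ (ψ q)
  obtain ⟨p₀', hp₀'⟩ := hφ (ψ q')
  have hsplit : ⁅(p, q), (p', q')⁆ =
      (⁅p, p'⁆, 1) * (⁅p₀, p₀'⁆, 1)⁻¹ * (⁅p₀, p₀'⁆, ⁅q, q'⁆) := by
    simp only [Prod.mk_commutatorElement_mk, Prod.inv_mk, Prod.mk_mul_mk, inv_one, mul_one,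
      one_mul, inv_mul_cancel_right]
  have hone :
      QuotientGroup.mk' ⁅fiberProduct φ ψ, fiberProduct φ ψ⁆ (⁅p₀, p₀'⁆, ⁅q, q'⁆) = 1 :=
    (QuotientGroup.eq_one_iff _).2 (commutatorElement_mem_commutator_fiberProduct hp₀ hp₀')
  rw [← map_commutatorElement, hsplit, map_mul, map_mul, map_inv, hone, mul_one]
  exact mul_mem (hS p p') (inv_mem (hS p₀ p₀'))

theorem map_commutator_top_eq_zpowers (hψ : Function.Surjective ψ) (x y : P₁)
    (hxy : ∀ g, ∃ m n : ℕ, φ (x ^ m * y ^ n) = g) :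
    Subgroup.map (QuotientGroup.mk' ⁅fiberProduct φ ψ, fiberProduct φ ψ⁆)
        ⁅(⊤ : Subgroup (P₁ × P₂)), ⊤⁆ =
      Subgroup.zpowers (QuotientGroup.mk' ⁅fiberProduct φ ψ, fiberProduct φ ψ⁆ (⁅x, y⁆, 1)) := by
  let f := (QuotientGroup.mk' ⁅fiberProduct φ ψ, fiberProduct φ ψ⁆).comp (MonoidHom.inl P₁ P₂)
  have hf : ∀ n ∈ φ.ker, ∀ c, Commute (f n) (f c) := fun _ hn => commute_mk_inl_of_mem_ker hψ hn
  refine le_antisymm (map_commutator_top_le (fun g => ?_) _ fun p p' => ?_) ?_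
  · obtain ⟨m, n, h⟩ := hxy g
    exact ⟨_, h⟩
  · obtain ⟨m, n, h⟩ := hxy (φ p)
    obtain ⟨k, l, h'⟩ := hxy (φ p')
    have hpow : f ⁅p, p'⁆ = f ⁅x, y⁆ ^ ((m * l : ℤ) - n * k) :=
      (map_commutatorElement_congr f hf h.symm h'.symm).trans
        (map_commutatorElement_pow_mul_pow f (commute_map_commutatorElement f hf) x y m n k l)
    exact Subgroup.mem_zpowers_iff.2 ⟨_, hpow.symm⟩
  · rw [Subgroup.zpowers_le, ← commutatorElement_one_left (1 : P₂),
      ← Prod.mk_commutatorElement_mk]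
    exact Subgroup.mem_map_of_mem _
      (Subgroup.commutator_mem_commutator (Subgroup.mem_top _) (Subgroup.mem_top _))

theorem eq_of_mem_commutator_fiberProduct {E : Type*} [Group E] (ρ : E →* G)
    (hρ : ∀ n ∈ ρ.ker, ∀ e, Commute n e) (θ₁ : P₁ →* E) (θ₂ : P₂ →* E)
    (h₁ : ρ.comp θ₁ = φ) (h₂ : ρ.comp θ₂ = ψ) {p : P₁} {q : P₂}
    (h : (p, q) ∈ ⁅fiberProduct φ ψ, fiberProduct φ ψ⁆) : θ₁ p = θ₂ q := by
  suffices ⁅fiberProduct φ ψ, fiberProduct φ ψ⁆ ≤ (θ₁.comp (MonoidHom.fst P₁ P₂)).eqLocus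
      (θ₂.comp (MonoidHom.snd P₁ P₂)) from this h
  rw [Subgroup.commutator_le]
  rintro ⟨p, q⟩ hk ⟨p', q'⟩ hk'
  rw [mk_mem_fiberProduct, ← h₁, ← h₂] at hk hk'
  show θ₁ ⁅p, p'⁆ = θ₂ ⁅q, q'⁆
  rw [map_commutatorElement, map_commutatorElement]
  exact map_commutatorElement_congr (MonoidHom.id E) hρ hk hk'

end FiberProduct

/-- The Heisenberg group of upper unitriangular matrices `[[1, x, z], [0, 1, y], [0, 0, 1]]`. -/
@[ext]
structure Heisenberg (R : Type*) where
  x : R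
  y : R
  z : R

namespace Heisenberg

variable {R : Type*} [CommRing R]

instance : Mul (Heisenberg R) := ⟨fun a b => ⟨a.x + b.x, a.y + b.y, a.z + b.z + a.x * b.y⟩⟩
instance : One (Heisenberg R) := ⟨⟨0, 0, 0⟩⟩
instance : Inv (Heisenberg R) := ⟨fun a => ⟨-a.x, -a.y, -a.z + a.x * a.y⟩⟩

@[simp] theorem mul_x (a b : Heisenberg R) : (a * b).x = a.x + b.x := rfl
@[simp] theorem mul_y (a b : Heisenberg R) : (a * b).y = a.y + b.y := rfl
@[simp] theorem mul_z (a b : Heisenberg R) : (a * b).z = a.z + b.z + a.x * b.y := rfl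
@[simp] theorem one_x : (1 : Heisenberg R).x = 0 := rfl
@[simp] theorem one_y : (1 : Heisenberg R).y = 0 := rfl
@[simp] theorem one_z : (1 : Heisenberg R).z = 0 := rfl
@[simp] theorem inv_x (a : Heisenberg R) : a⁻¹.x = -a.x := rfl
@[simp] theorem inv_y (a : Heisenberg R) : a⁻¹.y = -a.y := rfl
@[simp] theorem inv_z (a : Heisenberg R) : a⁻¹.z = -a.z + a.x * a.y := rfl

instance : Group (Heisenberg R) where
  mul_assoc a b c := by ext <;> simp <;> ring
  one_mul a := by ext <;> simp
  mul_one a := by ext <;> simp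
  inv_mul_cancel a := by ext <;> simp

theorem commutatorElement_eq (a b : Heisenberg R) :
    ⁅a, b⁆ = ⟨0, 0, a.x * b.y - b.x * a.y⟩ := by
  rw [commutatorElement_def]
  ext <;> simp; ring

theorem pow_three_eq_one (h3 : (3 : R) = 0) (a : Heisenberg R) : a ^ 3 = 1 := by
  rw [pow_succ, pow_two]
  ext <;> simp <;> ring_nf <;> simp [h3]

def toProd : Heisenberg R →* Multiplicative (R × R) where
  toFun a := Multiplicative.ofAdd (a.x, a.y)
  map_one' := rfl
  map_mul' _ _ := rfl

theorem commute_of_mem_ker_toProd {n : Heisenberg R} (hn : n ∈ toProd.ker) (a : Heisenberg R) :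
    Commute n a := by
  have hx : n.x = 0 := congrArg (fun v => (Multiplicative.toAdd v).1) hn
  have hy : n.y = 0 := congrArg (fun v => (Multiplicative.toAdd v).2) hn
  ext <;> simp [hx, hy]; ring

end Heisenberg

theorem lift_eq_one_of_mem_bcRels₁ {H : Type*} [Group H] {g : Fin 4 → H}
    (hg : ∀ i, g i ^ 3 = 1) (hprod : g 0 * g 1 * g 2 * g 3 = 1) :
    ∀ r ∈ bcRels₁, FreeGroup.lift g r = 1 := by
  simp only [bcRels₁, Set.mem_insert_iff, Set.mem_singleton_iff]
  rintro r (rfl | rfl | rfl | rfl | rfl) <;> simp [hg, hprod]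

theorem of_pow_three_bcRels₁ (i : Fin 4) :
    (PresentedGroup.of i : PresentedGroup bcRels₁) ^ 3 = 1 := by
  rw [PresentedGroup.of, ← map_pow]
  exact PresentedGroup.one_of_mem (by fin_cases i <;> simp [bcRels₁])

/-- The `z`-entries of the images of the generators are chosen so that `a₁a₂a₃a₄ ↦ 1`. -/
def bcHeisenberg₁ : PresentedGroup bcRels₁ →* Heisenberg (ZMod 3) :=
  PresentedGroup.toGroup (f := ![⟨1, 0, 2⟩, ⟨0, 1, 0⟩, ⟨2, 0, 0⟩, ⟨0, 2, 0⟩])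
    (lift_eq_one_of_mem_bcRels₁ (fun _ => Heisenberg.pow_three_eq_one rfl _) (by ext <;> rfl))

def bcHeisenberg₂ : PresentedGroup bcRels₂ →* Heisenberg (ZMod 3) :=
  PresentedGroup.toGroup (rels := bcRels₂)
    (f := ![⟨1, 1, 2⟩, ⟨1, 2, 0⟩, ⟨2, 2, 0⟩, ⟨2, 1, 0⟩]) fun r hr =>
      lift_eq_one_of_mem_bcRels₁ (fun _ => Heisenberg.pow_three_eq_one rfl _) (by ext <;> rfl) r hr

theorem toProd_comp_bcHeisenberg₁ (φ : PresentedGroup bcRels₁ →* bcG)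
    (hφ0 : φ (PresentedGroup.of 0) = Multiplicative.ofAdd (1, 0))
    (hφ1 : φ (PresentedGroup.of 1) = Multiplicative.ofAdd (0, 1))
    (hφ2 : φ (PresentedGroup.of 2) = Multiplicative.ofAdd (-1, 0))
    (hφ3 : φ (PresentedGroup.of 3) = Multiplicative.ofAdd (0, -1)) :
    Heisenberg.toProd.comp bcHeisenberg₁ = φ := by
  refine PresentedGroup.ext fun i => ?_
  fin_cases i <;> simp [bcHeisenberg₁, Heisenberg.toProd, hφ0, hφ1, hφ2, hφ3] <;> rfl

theorem toProd_comp_bcHeisenberg₂ (ψ : PresentedGroup bcRels₂ →* bcG)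
    (hψ0 : ψ (PresentedGroup.of 0) = Multiplicative.ofAdd (1, 1))
    (hψ1 : ψ (PresentedGroup.of 1) = Multiplicative.ofAdd (1, -1))
    (hψ2 : ψ (PresentedGroup.of 2) = Multiplicative.ofAdd (-1, -1))
    (hψ3 : ψ (PresentedGroup.of 3) = Multiplicative.ofAdd (-1, 1)) :
    Heisenberg.toProd.comp bcHeisenberg₂ = ψ := by
  refine PresentedGroup.ext fun i => ?_
  fin_cases i <;> simp [bcHeisenberg₂, Heisenberg.toProd, hψ0, hψ1, hψ2, hψ3] <;> rfl

theorem bcHeisenberg₁_commutatorElement_ne_one :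
    bcHeisenberg₁ ⁅PresentedGroup.of (rels := bcRels₁) 0, PresentedGroup.of 1⁆ ≠ 1 := by
  rw [map_commutatorElement, Heisenberg.commutatorElement_eq]
  intro h
  exact absurd (congrArg Heisenberg.z h) (by decide)

theorem exists_map_pow_mul_pow_eq {P G : Type*} [Group P] [Group G] {k : ℕ} (φ : P →* G)
    {x y : P} {u v : G} (hx : φ x = u) (hy : φ y = v)
    (huv : ∀ g, ∃ m n : Fin k, u ^ (m : ℕ) * v ^ (n : ℕ) = g) (g : G) :
    ∃ m n : ℕ, φ (x ^ m * y ^ n) = g := by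
  obtain ⟨m, n, h⟩ := huv g
  exact ⟨m, n, by rw [map_mul, map_pow, map_pow, hx, hy, h]⟩

/-- Bauer–Catanese case `G = (ℤ/3ℤ)²`. With `F = Π₁ × Π₂` and `K` the
kernel of `(p,q) ↦ φ(p) - ψ(q)`, the quotient `⁅F,F⁆/⁅K,K⁆` (realized as the image
of `⁅F,F⁆` in `F/⁅K,K⁆`) is isomorphic to `ℤ/3ℤ`. -/
theorem bauer_catanese_Z3_commutator_quotient
    (φ : PresentedGroup bcRels₁ →* bcG) (ψ : PresentedGroup bcRels₂ →* bcG)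
    (hφ0 : φ (PresentedGroup.of 0) = Multiplicative.ofAdd (1, 0))
    (hφ1 : φ (PresentedGroup.of 1) = Multiplicative.ofAdd (0, 1))
    (hφ2 : φ (PresentedGroup.of 2) = Multiplicative.ofAdd (-1, 0))
    (hφ3 : φ (PresentedGroup.of 3) = Multiplicative.ofAdd (0, -1))
    (hψ0 : ψ (PresentedGroup.of 0) = Multiplicative.ofAdd (1, 1))
    (hψ1 : ψ (PresentedGroup.of 1) = Multiplicative.ofAdd (1, -1))
    (hψ2 : ψ (PresentedGroup.of 2) = Multiplicative.ofAdd (-1, -1))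
    (hψ3 : ψ (PresentedGroup.of 3) = Multiplicative.ofAdd (-1, 1)) :
    Nonempty
      ((Subgroup.map
          (QuotientGroup.mk'
            ⁅MonoidHom.ker
                (φ.comp (MonoidHom.fst (PresentedGroup bcRels₁) (PresentedGroup bcRels₂)) /
                  ψ.comp (MonoidHom.snd (PresentedGroup bcRels₁) (PresentedGroup bcRels₂))),
              MonoidHom.ker
                (φ.comp (MonoidHom.fst (PresentedGroup bcRels₁) (PresentedGroup bcRels₂)) /
                  ψ.comp (MonoidHom.snd (PresentedGroup bcRels₁) (PresentedGroup bcRels₂)))⁆)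
          ⁅(⊤ : Subgroup (PresentedGroup bcRels₁ × PresentedGroup bcRels₂)),
            (⊤ : Subgroup (PresentedGroup bcRels₁ × PresentedGroup bcRels₂))⁆) ≃*
        Multiplicative (ZMod 3)) := by
  have hψ : Function.Surjective ψ := fun g =>
    have ⟨m, n, h⟩ := exists_map_pow_mul_pow_eq (k := 3) ψ hψ0 hψ1 (by decide) g
    ⟨_, h⟩
  set c := QuotientGroup.mk' ⁅fiberProduct φ ψ, fiberProduct φ ψ⁆
    (⁅PresentedGroup.of (rels := bcRels₁) 0, PresentedGroup.of 1⁆, (1 : PresentedGroup bcRels₂))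
  have hc3 : c ^ 3 = 1 := mk_inl_commutatorElement_pow_eq_one hψ _ (of_pow_three_bcRels₁ 1)
  have hc1 : c ≠ 1 := fun h => bcHeisenberg₁_commutatorElement_ne_one <|
    (eq_of_mem_commutator_fiberProduct (Heisenberg.toProd : Heisenberg (ZMod 3) →* bcG)
      (fun _ => Heisenberg.commute_of_mem_ker_toProd) bcHeisenberg₁ bcHeisenberg₂
      (toProd_comp_bcHeisenberg₁ φ hφ0 hφ1 hφ2 hφ3)
      (toProd_comp_bcHeisenberg₂ ψ hψ0 hψ1 hψ2 hψ3)
      ((QuotientGroup.eq_one_iff _).1 h)).trans (map_one _)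
  rw [map_commutator_top_eq_zpowers hψ _ _
    (exists_map_pow_mul_pow_eq (k := 3) φ hφ0 hφ1 (by decide))]
  exact nonempty_zpowers_mulEquiv_zmod (orderOf_eq_prime hc3 hc1)
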